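/- Properness of value functions: let f : ℝⁿ × ℝᵐ → ℝ̄ be proper and convex. If v̄ ∈ dom q₀, i.e. f*(v̄, ·) ≢ +∞, then p_v̄(u) = inf_x (f(x,u) − ⟨v̄,x⟩) is a proper function on ℝᵐ (never takes −∞ and is not identically +∞). Symmetrically, if ū ∈ dom p₀, i.e. f(·, ū) ≢ +∞, then q_ū(v) = inf_y (f*(v,y) − ⟨ū,y⟩) is proper on ℝⁿ. -/

import Mathlib

open scoped BigOperators

noncomputable def dotE {n : ℕ} (v x : Fin n → ℝ) : EReal := ((∑ i, v i * x i : ℝ) : EReal)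

noncomputable def conj {n : ℕ} (h : (Fin n → ℝ) → EReal) (v : Fin n → ℝ) : EReal :=
  ⨆ x, dotE v x - h x

noncomputable def conj2 {n m : ℕ} (f : (Fin n → ℝ) × (Fin m → ℝ) → EReal)
    (v : Fin n → ℝ) (y : Fin m → ℝ) : EReal :=
  ⨆ x, ⨆ u, dotE v x + dotE y u - f (x, u)

def epi {α : Type*} (h : α → EReal) : Set (α × ℝ) := {p | h p.1 ≤ (p.2 : EReal)}

def ConvexFn {α : Type*} [AddCommMonoid α] [Module ℝ α] (h : α → EReal) : Prop :=
  Convex ℝ (epi h)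

def ClosedFn {α : Type*} [TopologicalSpace α] (h : α → EReal) : Prop := IsClosed (epi h)

def ProperFn {α : Type*} (h : α → EReal) : Prop := (∃ x, h x ≠ ⊤) ∧ ∀ x, h x ≠ ⊥

/-!
Fenchel–Young gives `f (x, u) - ⟨v̄, x⟩ ≥ ⟨y, u⟩ - f*(v̄, y)`, so `p_v̄` is bounded below by a
real number as soon as `f*(v̄, y) < ∞` for one `y`, and it is somewhere finite because `f` is.
Symmetrically `q_ū` is bounded below as soon as `f (x, ū) < ∞` for one `x`. What remains, that
`q_ū` is somewhere finite, amounts to `f*` being somewhere finite, i.e. to `f` having an affine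
minorant. For a proper convex function on a finite-dimensional space, separate from the closed
epigraph a point lying below the graph at an interior point of the domain, where the function is
continuous; if the domain has empty interior, first precompose with an affine projection onto its
affine span.
-/

namespace EReal

lemma sub_coe_ne_top {x : EReal} (hx : x ≠ ⊤) (r : ℝ) : x - r ≠ ⊤ := by
  induction x using EReal.rec <;> simp_all
  exact_mod_cast coe_ne_top _

lemma coe_le_of_forall_le_coe {a : ℝ} {x : EReal} (h : ∀ t : ℝ, x ≤ t → a ≤ t) :
    (a : EReal) ≤ x := by
  induction x using EReal.rec
  · linarith [h (a - 1) bot_le]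
  · exact EReal.coe_le_coe_iff.2 (h _ le_rfl)
  · exact le_top

lemma coe_sub_le_sub_of_add_sub_le_of_right_le {a b c : ℝ} {F G : EReal}
    (h : (a + b : EReal) - F ≤ G) (hG : G ≤ c) : ((b - c : ℝ) : EReal) ≤ F - a := by
  induction F using EReal.rec <;> induction G using EReal.rec <;> norm_cast at * <;> simp_all
  linarith

lemma coe_sub_le_sub_of_add_sub_le_of_left_le {a b c : ℝ} {F G : EReal}
    (h : (a + b : EReal) - F ≤ G) (hF : F ≤ c) : ((a - c : ℝ) : EReal) ≤ G - b := by
  induction F using EReal.rec <;> induction G using EReal.rec <;> norm_cast at * <;> simp_all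
  linarith

lemma coe_sub_le_coe_neg_of_coe_add_le {a c : ℝ} {F : EReal} (h : ((a + c : ℝ) : EReal) ≤ F) :
    a - F ≤ ((-c : ℝ) : EReal) := by
  induction F using EReal.rec <;> norm_cast at * <;> simp_all
  linarith

end EReal

def effDom {α : Type*} (h : α → EReal) : Set α := {z | h z ≠ ⊤}

lemma affineSpan_eq_top_of_isCompl {k E : Type*} [Ring k] [AddCommGroup E] [Module k E]
    {s t : Set E} (hst : s ⊆ t) {K : Submodule k E} (hK : IsCompl (affineSpan k s).direction K)
    {z₀ : E} (hz₀ : z₀ ∈ s) (hK_sub : ∀ v ∈ K, z₀ + v ∈ t) : affineSpan k t = ⊤ := by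
  have hz₀t : z₀ ∈ affineSpan k t := subset_affineSpan k t (hst hz₀)
  rw [← AffineSubspace.direction_eq_top_iff_of_nonempty ⟨z₀, hz₀t⟩, eq_top_iff, ← hK.sup_eq_top]
  refine sup_le (AffineSubspace.direction_le (affineSpan_mono k hst)) fun v hv => ?_
  simpa using AffineSubspace.vsub_mem_direction (subset_affineSpan k t (hK_sub v hv)) hz₀t

section ConvexFunction

variable {E : Type*} {h : E → EReal}

section Module

variable [AddCommGroup E] [Module ℝ E]

lemma Convex.effDom_of_epi (hc : Convex ℝ (epi h)) : Convex ℝ (effDom h) := by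
  have hdom : effDom h = Prod.fst '' epi h := by
    ext z
    refine ⟨fun hz => ⟨(z, (h z).toReal), EReal.le_coe_toReal hz, rfl⟩, ?_⟩
    rintro ⟨p, hp, rfl⟩
    exact ne_top_of_le_ne_top (EReal.coe_ne_top _) hp
  rw [hdom]
  exact hc.linear_image (LinearMap.fst ℝ E ℝ)

lemma convexOn_toReal_of_convex_epi (hc : Convex ℝ (epi h)) (hbot : ∀ z, h z ≠ ⊥) :
    ConvexOn ℝ (effDom h) (fun z => (h z).toReal) := by
  refine ⟨hc.effDom_of_epi, fun z hz w hw a b ha hb hab => ?_⟩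
  have hzw : h (a • z + b • w) ≤ ((a * (h z).toReal + b * (h w).toReal : ℝ) : EReal) :=
    hc (EReal.le_coe_toReal hz : (z, (h z).toReal) ∈ epi h)
      (EReal.le_coe_toReal hw : (w, (h w).toReal) ∈ epi h) ha hb hab
  simp only [smul_eq_mul]
  rw [← EReal.toReal_coe (a * (h z).toReal + b * (h w).toReal)]
  exact EReal.toReal_le_toReal hzw (hbot _) (EReal.coe_ne_top _)

lemma Convex.epi_comp_affineMap {F : Type*} [AddCommGroup F] [Module ℝ F]
    (hc : Convex ℝ (epi h)) (P : F →ᵃ[ℝ] E) : Convex ℝ (epi (h ∘ P)) :=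
  hc.affine_preimage (P.prodMap (AffineMap.id ℝ ℝ))

end Module

section Normed

variable [NormedAddCommGroup E] [NormedSpace ℝ E]

lemma exists_affine_minorant_of_notMem_closure_epi (hc : Convex ℝ (epi h)) {z₁ : E} {r s : ℝ}
    (hr : h z₁ ≤ r) (hs : (z₁, s) ∉ closure (epi h)) :
    ∃ (ℓ : E →L[ℝ] ℝ) (c : ℝ), ∀ z, ((ℓ z + c : ℝ) : EReal) ≤ h z := by
  obtain ⟨φ, u, hφ, hu⟩ := geometric_hahn_banach_closed_point hc.closure isClosed_closure hs
  set L := φ.comp (ContinuousLinearMap.inl ℝ E ℝ)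
  set c₀ := φ (0, 1)
  have hφ_apply : ∀ z t, φ (z, t) = L z + t * c₀ := fun z t => by
    rw [show (z, t) = ((z, 0) : E × ℝ) + t • ((0 : E), (1 : ℝ)) by simp, map_add, map_smul,
      smul_eq_mul]
    rfl
  have hlt : ∀ z (t : ℝ), h z ≤ t → L z + t * c₀ < u := fun z t hzt =>
    hφ_apply z t ▸ hφ _ (subset_closure hzt)
  -- the hyperplane is not vertical: it separates `(z₁, s)` from the vertical ray above `(z₁, r)`
  have hc₀ : c₀ < 0 := by
    by_contra! hc₀
    have hle : h z₁ ≤ ((r + |s - r| : ℝ) : EReal) :=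
      hr.trans (EReal.coe_le_coe_iff.2 (by linarith [abs_nonneg (s - r)]))
    have := hlt _ _ hle
    rw [hφ_apply] at hu
    nlinarith [le_abs_self (s - r)]
  refine ⟨-c₀⁻¹ • L, u / c₀, fun z => EReal.coe_le_of_forall_le_coe fun t ht => ?_⟩
  have hzt : (u - L z) / c₀ ≤ t := (div_le_iff_of_neg hc₀).2 (by linarith [hlt z t ht])
  calc (-c₀⁻¹ • L) z + u / c₀ = (u - L z) / c₀ := by
        simp only [smul_apply, smul_eq_mul]
        ring
    _ ≤ t := hzt

variable [FiniteDimensional ℝ E]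

lemma notMem_closure_epi_of_mem_interior (hc : Convex ℝ (epi h)) (hbot : ∀ z, h z ≠ ⊥) {z₁ : E}
    (hz₁ : z₁ ∈ interior (effDom h)) : (z₁, (h z₁).toReal - 1) ∉ closure (epi h) := by
  set g : E → ℝ := fun z => (h z).toReal
  have hg : ContinuousAt g z₁ := (convexOn_toReal_of_convex_epi hc hbot).continuousOn_interior
    |>.continuousAt (isOpen_interior.mem_nhds hz₁)
  have hU : {z | g z₁ - 1 / 2 < g z} ∈ nhds z₁ := hg.eventually (lt_mem_nhds (by linarith))
  intro hmem
  obtain ⟨⟨z, t⟩, ⟨hgz, ht⟩, hzt⟩ := mem_closure_iff_nhds.1 hmem _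
    (prod_mem_nhds hU (Iio_mem_nhds (by linarith : g z₁ - 1 < g z₁ - 1 / 2)))
  have hgt : g z ≤ t := by simpa using EReal.toReal_le_toReal hzt (hbot z) (EReal.coe_ne_top t)
  linarith [show g z₁ - 1 / 2 < g z from hgz, Set.mem_Iio.1 ht]

lemma exists_affine_minorant_of_interior_nonempty (hc : Convex ℝ (epi h)) (hbot : ∀ z, h z ≠ ⊥)
    (hne : (interior (effDom h)).Nonempty) :
    ∃ (ℓ : E →L[ℝ] ℝ) (c : ℝ), ∀ z, ((ℓ z + c : ℝ) : EReal) ≤ h z :=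
  let ⟨_, hz₁⟩ := hne
  exists_affine_minorant_of_notMem_closure_epi hc (EReal.le_coe_toReal (interior_subset hz₁))
    (notMem_closure_epi_of_mem_interior hc hbot hz₁)

/-- Precomposing with a projection `P` onto the affine span of the domain, along a complement of
its direction, makes the domain full-dimensional without changing `h` on it. -/
theorem exists_affine_minorant (hc : Convex ℝ (epi h)) (hbot : ∀ z, h z ≠ ⊥)
    (hne : (effDom h).Nonempty) :
    ∃ (ℓ : E →L[ℝ] ℝ) (c : ℝ), ∀ z, ((ℓ z + c : ℝ) : EReal) ≤ h z := by
  obtain ⟨z₀, hz₀⟩ := hne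
  set W := (affineSpan ℝ (effDom h)).direction
  obtain ⟨K, hWK⟩ := W.exists_isCompl
  set π := W.projection K hWK
  let P : E →ᵃ[ℝ] E := π.toAffineMap + AffineMap.const ℝ E (z₀ - π z₀)
  have hP : ∀ z, P z = z₀ + π (z - z₀) := fun z => by
    simp only [P, AffineMap.coe_add, LinearMap.coe_toAffineMap, AffineMap.coe_const, Pi.add_apply,
      Function.const_apply, map_sub]
    abel
  have hPD : ∀ z ∈ effDom h, P z = z := fun z hz => by
    have hzW : z - z₀ ∈ W := by
      simpa using AffineSubspace.vsub_mem_direction (subset_affineSpan ℝ _ hz)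
        (subset_affineSpan ℝ _ hz₀)
    rw [hP, Submodule.projection_apply_of_mem_left hWK hzW, add_sub_cancel]
  have hPK : ∀ v ∈ K, P (z₀ + v) = z₀ := fun v hv => by
    rw [hP, add_sub_cancel_left, Submodule.projection_apply_of_mem_right hWK hv, add_zero]
  have hcP := hc.epi_comp_affineMap P
  obtain ⟨ℓ, c, hℓ⟩ := exists_affine_minorant_of_interior_nonempty hcP (fun z => hbot (P z)) <| by
    rw [hcP.effDom_of_epi.interior_nonempty_iff_affineSpan_eq_top]
    refine affineSpan_eq_top_of_isCompl (fun z hz => ?_) hWK hz₀ fun v hv => ?_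
    · simpa [effDom, hPD z hz] using hz
    · simpa [effDom, hPK v hv] using hz₀
  refine ⟨ℓ, c, fun z => ?_⟩
  by_cases hz : z ∈ effDom h
  · simpa [hPD z hz] using hℓ z
  · simp_all [effDom]

end Normed

end ConvexFunction

lemma LinearMap.apply_eq_sum_apply_single_mul {ι R : Type*} [Fintype ι] [DecidableEq ι]
    [CommSemiring R] (φ : (ι → R) →ₗ[R] R) (x : ι → R) : φ x = ∑ i, φ (Pi.single i 1) * x i := by
  conv_lhs => rw [← Finset.univ_sum_single x]
  refine (map_sum φ _ _).trans (Finset.sum_congr rfl fun i _ => ?_)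
  rw [mul_comm, ← smul_eq_mul, ← map_smul, ← Pi.single_smul', smul_eq_mul, mul_one]

section ValueFunctions

variable {n m : ℕ}

lemma dotE_comm (v x : Fin n → ℝ) : dotE v x = dotE x v := by
  simp only [dotE, mul_comm]

lemma exists_dotE_add_dotE_eq (ℓ : (Fin n → ℝ) × (Fin m → ℝ) →L[ℝ] ℝ) :
    ∃ v y, ∀ x u, dotE v x + dotE y u = ((ℓ (x, u) : ℝ) : EReal) := by
  refine ⟨fun i => ℓ (Pi.single i 1, 0), fun j => ℓ (0, Pi.single j 1), fun x u => ?_⟩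
  have hx := (ℓ.comp (ContinuousLinearMap.inl ℝ _ _)).toLinearMap.apply_eq_sum_apply_single_mul x
  have hu := (ℓ.comp (ContinuousLinearMap.inr ℝ _ _)).toLinearMap.apply_eq_sum_apply_single_mul u
  simp only [ContinuousLinearMap.coe_coe, ContinuousLinearMap.comp_apply,
    ContinuousLinearMap.inl_apply, ContinuousLinearMap.inr_apply] at hx hu
  rw [← ℓ.comp_inl_add_comp_inr (x, u)]
  simp [dotE, hx, hu, mul_comm]

lemma dotE_sub_coe_ne_bot (v x : Fin n → ℝ) (r : ℝ) : dotE v x - r ≠ ⊥ := by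
  rw [dotE, ← EReal.coe_sub]
  exact EReal.coe_ne_bot _

section Conj2

variable {f : (Fin n → ℝ) × (Fin m → ℝ) → EReal} {v x : Fin n → ℝ} {y u : Fin m → ℝ}

lemma add_sub_le_conj2 : dotE v x + dotE y u - f (x, u) ≤ conj2 f v y :=
  le_iSup₂_of_le (f := fun x u => dotE v x + dotE y u - f (x, u)) x u le_rfl

lemma dotE_sub_le_sub_dotE_of_conj2_le {C : ℝ} (hC : conj2 f v y ≤ C) :
    dotE y u - C ≤ f (x, u) - dotE v x :=
  EReal.coe_sub_le_sub_of_add_sub_le_of_right_le add_sub_le_conj2 hC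

lemma dotE_sub_le_conj2_sub_dotE_of_le {r : ℝ} (hr : f (x, u) ≤ r) :
    dotE v x - r ≤ conj2 f v y - dotE u y := by
  rw [dotE_comm u y]
  exact EReal.coe_sub_le_sub_of_add_sub_le_of_left_le add_sub_le_conj2 hr

end Conj2

-- an affine minorant `ℓ + c ≤ f` is a point where `conj2 f ≤ -c`
lemma exists_conj2_ne_top {f : (Fin n → ℝ) × (Fin m → ℝ) → EReal} (hc : ConvexFn f)
    (hf : ProperFn f) : ∃ v y, conj2 f v y ≠ ⊤ := by
  obtain ⟨⟨z₀, hz₀⟩, hbot⟩ := hf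
  obtain ⟨ℓ, c, hℓ⟩ := exists_affine_minorant hc hbot ⟨z₀, hz₀⟩
  obtain ⟨v, y, hvy⟩ := exists_dotE_add_dotE_eq ℓ
  refine ⟨v, y, ne_top_of_le_ne_top (EReal.coe_ne_top (-c)) (iSup₂_le fun x u => ?_)⟩
  rw [hvy]
  exact EReal.coe_sub_le_coe_neg_of_coe_add_le (hℓ (x, u))

end ValueFunctions

/-- for proper convex `f`, if `f*(v̄,·) ≢ +∞` then `p_v̄` is proper,
and if `f(·,ū) ≢ +∞` then `q_ū` is proper. -/
theorem stmt14 {n m : ℕ} (f : (Fin n → ℝ) × (Fin m → ℝ) → EReal)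
    (hproper : ProperFn f) (hconvex : ConvexFn f) :
    (∀ vb : Fin n → ℝ, (∃ y : Fin m → ℝ, conj2 f vb y ≠ ⊤) →
      ProperFn (fun u : Fin m → ℝ => ⨅ x : Fin n → ℝ, f (x, u) - dotE vb x)) ∧
    (∀ ub : Fin m → ℝ, (∃ x : Fin n → ℝ, f (x, ub) ≠ ⊤) →
      ProperFn (fun v : Fin n → ℝ => ⨅ y : Fin m → ℝ, conj2 f v y - dotE ub y)) := by
  obtain ⟨z₀, hz₀⟩ := hproper.1
  refine ⟨fun vb ⟨y, hy⟩ => ⟨⟨z₀.2, ?_⟩, fun u => ?_⟩, fun ub ⟨x₀, hx₀⟩ => ⟨?_, fun v => ?_⟩⟩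
  · exact ne_top_of_le_ne_top (EReal.sub_coe_ne_top hz₀ _) (iInf_le _ z₀.1)
  · exact ne_bot_of_le_ne_bot (dotE_sub_coe_ne_bot y u _) <| le_iInf fun x =>
      dotE_sub_le_sub_dotE_of_conj2_le (EReal.le_coe_toReal hy)
  · obtain ⟨v, y, hvy⟩ := exists_conj2_ne_top hconvex hproper
    exact ⟨v, ne_top_of_le_ne_top (EReal.sub_coe_ne_top hvy _) (iInf_le _ y)⟩
  · exact ne_bot_of_le_ne_bot (dotE_sub_coe_ne_bot v x₀ _) <| le_iInf fun y =>
      dotE_sub_le_conj2_sub_dotE_of_le (EReal.le_coe_toReal hx₀)
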